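/- For a uniformly random word w in the set of words with n occurrences each of 1, 2, 3 (n ≥ 1), the expectation of s_1(w) is 0 and the variance of s_1(w) equals n²(2n+1)/3. -/

import Mathlib

/-- Number of pairs of positions i < j with `w i = a` and `w j = b`. -/
def cnt (a b : ℕ) (w : List ℕ) : ℕ :=
  ((Finset.univ : Finset (Fin w.length × Fin w.length)).filter
    (fun p => p.1 < p.2 ∧ w.get p.1 = a ∧ w.get p.2 = b)).card

def s1 (w : List ℕ) : ℤ := (cnt 2 1 w : ℤ) - (cnt 1 2 w : ℤ)
def s2 (w : List ℕ) : ℤ := (cnt 3 2 w : ℤ) - (cnt 2 3 w : ℤ)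
def s3 (w : List ℕ) : ℤ := (cnt 1 3 w : ℤ) - (cnt 3 1 w : ℤ)

/-- The (finite) set of words in {1,2,3} with `a1` ones, `a2` twos and `a3` threes. -/
def W (a1 a2 a3 : ℕ) : Finset (List ℕ) :=
  (List.replicate a1 1 ++ List.replicate a2 2 ++ List.replicate a3 3).permutations.toFinset

/-!
Average over the arrangements of a multiset `s` by conditioning on the first letter: it is `x`
with probability `count x s / card s` (from the multinomial count of arrangements), and the rest
is a uniform arrangement of `s.erase x`. Prepending `1` lowers `s1` by the number `b` of `2`s,
prepending `2` raises it by the number `a` of `1`s, and other letters leave it unchanged. Hence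
`𝔼 s1 = 0` by induction, and `Q(a, b) = 𝔼 s1²` satisfies
`(a + b) Q(a, b) = a (Q(a - 1, b) + b²) + b (Q(a, b - 1) + a²)`, solved by `ab(a + b + 1)/3`.
-/

open Finset
open scoped Nat BigOperators

namespace Multiset

variable {α : Type*} [DecidableEq α] {s : Multiset α} {x : α}

noncomputable def arrangements (s : Multiset α) : Finset (List α) := s.toList.permutations.toFinset

@[simp] theorem mem_arrangements {l : List α} : l ∈ s.arrangements ↔ (l : Multiset α) = s := by
  rw [arrangements, List.mem_toFinset, List.mem_permutations, ← coe_eq_coe, coe_toList]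

theorem arrangements_nonempty (s : Multiset α) : s.arrangements.Nonempty :=
  ⟨s.toList, by simp⟩

@[simp] theorem arrangements_zero : (0 : Multiset α).arrangements = {[]} := by
  ext l; simp

theorem cons_mem_arrangements_iff (hx : x ∈ s) {t : List α} :
    x :: t ∈ s.arrangements ↔ t ∈ (s.erase x).arrangements := by
  rw [mem_arrangements, mem_arrangements, ← cons_coe, ← cons_erase hx, erase_cons_head,
    cons_inj_right]

theorem arrangements_eq_biUnion (hs : s ≠ 0) :
    s.arrangements = s.toFinset.biUnion fun x => (s.erase x).arrangements.image (x :: ·) := by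
  ext l
  simp only [mem_biUnion, mem_image, mem_toFinset]
  constructor
  · rintro hl
    obtain _ | ⟨x, t⟩ := l
    · simp [eq_comm, hs] at hl
    · have hx : x ∈ s := by simp [← mem_arrangements.1 hl]
      exact ⟨x, hx, t, (cons_mem_arrangements_iff hx).1 hl, rfl⟩
  · rintro ⟨x, hx, t, ht, rfl⟩
    exact (cons_mem_arrangements_iff hx).2 ht

theorem sum_arrangements {M : Type*} [AddCommMonoid M] (hs : s ≠ 0) (f : List α → M) :
    ∑ l ∈ s.arrangements, f l = ∑ x ∈ s.toFinset, ∑ t ∈ (s.erase x).arrangements, f (x :: t) := by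
  rw [arrangements_eq_biUnion hs, sum_biUnion]
  · exact sum_congr rfl fun x _ => sum_image fun _ _ _ _ h => List.cons_injective h
  · intro x _ y _ hxy
    refine Finset.disjoint_left.2 ?_
    simp only [mem_image]
    rintro _ ⟨t, _, rfl⟩ ⟨u, _, h⟩
    exact hxy (List.cons_eq_cons.1 h).1.symm

theorem count_mul_prod_factorial_count_erase (hx : x ∈ s) :
    s.count x * ∏ y ∈ (s.erase x).toFinset, ((s.erase x).count y)! =
      ∏ y ∈ s.toFinset, (s.count y)! := by
  have hsub : (s.erase x).toFinset ⊆ s.toFinset := fun y hy =>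
    mem_toFinset.2 (mem_of_mem_erase (mem_toFinset.1 hy))
  rw [prod_subset hsub fun y _ hy => by simp [count_eq_zero.2 (by simpa using hy)],
    ← mul_prod_erase _ _ (mem_toFinset.2 hx), ← mul_prod_erase _ _ (mem_toFinset.2 hx),
    count_erase_self, ← mul_assoc, Nat.mul_factorial_pred (count_ne_zero.2 hx)]
  congr 1
  exact prod_congr rfl fun y hy => by rw [count_erase_of_ne (ne_of_mem_erase hy)]

theorem card_arrangements_mul_prod_factorial_count (s : Multiset α) :
    #s.arrangements * ∏ y ∈ s.toFinset, (s.count y)! = (card s)! := by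
  induction s using strongInductionOn with
  | ih s ih =>
  rcases eq_or_ne s 0 with rfl | hs
  · simp
  have hcard : card s = card s - 1 + 1 := (Nat.succ_pred_eq_of_pos (card_pos.2 hs)).symm
  calc #s.arrangements * ∏ y ∈ s.toFinset, (s.count y)!
      = ∑ x ∈ s.toFinset, s.count x * (#(s.erase x).arrangements *
          ∏ y ∈ (s.erase x).toFinset, ((s.erase x).count y)!) := by
        rw [card_eq_sum_ones, sum_arrangements hs, sum_mul]
        refine sum_congr rfl fun x hx => ?_
        rw [← count_mul_prod_factorial_count_erase (mem_toFinset.1 hx), ← card_eq_sum_ones]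
        ring
    _ = ∑ x ∈ s.toFinset, s.count x * (card s - 1)! := by
        refine sum_congr rfl fun x hx => ?_
        rw [ih _ (erase_lt.2 (mem_toFinset.1 hx)), card_erase_of_mem (mem_toFinset.1 hx),
          Nat.pred_eq_sub_one]
    _ = (card s)! := by
        rw [← sum_mul, toFinset_sum_count_eq, hcard, Nat.factorial_succ, Nat.add_sub_cancel]

theorem card_mul_card_arrangements_erase (hx : x ∈ s) :
    card s * #(s.erase x).arrangements = s.count x * #s.arrangements := by
  have hpos : 0 < ∏ y ∈ (s.erase x).toFinset, ((s.erase x).count y)! := by positivity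
  refine Nat.eq_of_mul_eq_mul_right hpos ?_
  have h := card_arrangements_mul_prod_factorial_count s
  rw [← count_mul_prod_factorial_count_erase hx] at h
  rw [mul_assoc, card_arrangements_mul_prod_factorial_count, card_erase_of_mem hx,
    Nat.pred_eq_sub_one, Nat.mul_factorial_pred (card_pos_iff_exists_mem.2 ⟨x, hx⟩).ne', ← h]
  ring

theorem card_mul_expect_arrangements {K : Type*} [Semifield K] [CharZero K]
    (s : Multiset α) (f : List α → K) :
    card s * 𝔼 l ∈ s.arrangements, f l =
      (s.map fun x => 𝔼 t ∈ (s.erase x).arrangements, f (x :: t)).sum := by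
  rcases eq_or_ne s 0 with rfl | hs
  · simp
  rw [sum_multiset_map_count, expect_eq_sum_div_card, sum_arrangements hs, mul_div_assoc',
    mul_sum, sum_div]
  refine sum_congr rfl fun x hx => ?_
  have h : (card s : K) * #(s.erase x).arrangements = s.count x * #s.arrangements := by
    exact_mod_cast card_mul_card_arrangements_erase (mem_toFinset.1 hx)
  have h0 : (#(s.erase x).arrangements : K) ≠ 0 := by
    simpa using ((s.erase x).arrangements_nonempty).card_ne_zero
  have h1 : (#s.arrangements : K) ≠ 0 := by simpa using s.arrangements_nonempty.card_ne_zero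
  rw [expect_eq_sum_div_card, nsmul_eq_mul]
  field_simp
  rw [mul_right_comm, h]
  ring

theorem cast_count_erase {K : Type*} [AddGroupWithOne K] (hx : x ∈ s) (y : α) :
    ((s.erase x).count y : K) = s.count y - if y = x then 1 else 0 := by
  split_ifs with h
  · subst h
    rw [count_erase_self, Nat.cast_pred (count_pos.2 hx)]
  · rw [count_erase_of_ne h, sub_zero]

end Multiset

theorem List.count_eq_card_filter_get {α : Type*} [DecidableEq α] (b : α) (w : List α) :
    w.count b = #{j : Fin w.length | w.get j = b} :=
  (Fin.card_filter_univ_eq_vector_get_eq_count b ⟨w, rfl⟩).symm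

theorem cnt_cons (a b x : ℕ) (w : List ℕ) :
    cnt a b (x :: w) = cnt a b w + if x = a then w.count b else 0 := by
  simp only [cnt, card_filter, ← univ_product_univ, sum_product, List.length_cons,
    Fin.sum_univ_succ, List.count_eq_card_filter_get]
  simp only [lt_self_iff_false, List.get_eq_getElem, List.length_cons, Fin.coe_ofNat_eq_mod,
    Nat.zero_mod, List.getElem_cons_zero, false_and, ↓reduceIte, Fin.succ_pos, Fin.val_succ,
    List.getElem_cons_succ, true_and, sum_boole, Nat.cast_id, zero_add, not_lt_zero,
    Fin.succ_lt_succ_iff]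
  split_ifs with h
  · simp [h, add_comm]
  · simp [h]

theorem s1_cons (x : ℕ) (w : List ℕ) :
    s1 (x :: w) = s1 w + (if x = 2 then (w.count 1 : ℤ) else 0) -
      (if x = 1 then (w.count 2 : ℤ) else 0) := by
  simp only [s1, cnt_cons]
  split_ifs <;> push_cast <;> ring

theorem s1_cons_of_mem_arrangements_erase {s : Multiset ℕ} {x : ℕ} {t : List ℕ}
    (ht : t ∈ (s.erase x).arrangements) :
    (s1 (x :: t) : ℚ) = s1 t + (if x = 2 then (s.count 1 : ℚ) else 0) -
      (if x = 1 then (s.count 2 : ℚ) else 0) := by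
  rw [Multiset.mem_arrangements] at ht
  rw [s1_cons, ← Multiset.coe_count, ← Multiset.coe_count, ht]
  split_ifs <;> simp_all [Multiset.count_erase_of_ne]

theorem expect_s1_arrangements (s : Multiset ℕ) : 𝔼 l ∈ s.arrangements, (s1 l : ℚ) = 0 := by
  induction s using Multiset.strongInductionOn with
  | ih s ih =>
  rcases eq_or_ne s 0 with rfl | hs
  · simp [s1, cnt]
  have hfirst : ∀ x ∈ s, 𝔼 t ∈ (s.erase x).arrangements, (s1 (x :: t) : ℚ) =
      (if x = 2 then (s.count 1 : ℚ) else 0) - (if x = 1 then (s.count 2 : ℚ) else 0) := by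
    intro x hx
    rw [expect_congr rfl fun t ht => s1_cons_of_mem_arrangements_erase ht, expect_sub_distrib,
      expect_add_distrib, ih _ (Multiset.erase_lt.2 hx)]
    simp [Multiset.arrangements_nonempty]
  have h := Multiset.card_mul_expect_arrangements s fun l => (s1 l : ℚ)
  rw [Multiset.map_congr rfl hfirst, Multiset.sum_map_sub,
    Multiset.sum_map_eq_nsmul_single 2 fun _ h _ => if_neg h,
    Multiset.sum_map_eq_nsmul_single 1 fun _ h _ => if_neg h] at h
  simpa [hs, mul_comm] using h

theorem three_mul_expect_s1_sq_arrangements (s : Multiset ℕ) :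
    3 * 𝔼 l ∈ s.arrangements, (s1 l : ℚ) ^ 2 =
      s.count 1 * s.count 2 * (s.count 1 + s.count 2 + 1) := by
  induction s using Multiset.strongInductionOn with
  | ih s ih =>
  rcases eq_or_ne s 0 with rfl | hs
  · simp [s1, cnt]
  -- weighted by `count 1 s` and `count 2 s`, the two corrections below cancel
  have hfirst : ∀ x ∈ s, 3 * 𝔼 t ∈ (s.erase x).arrangements, (s1 (x :: t) : ℚ) ^ 2 =
      s.count 1 * s.count 2 * (s.count 1 + s.count 2 + 1) +
        (if x = 1 then 2 * s.count 2 * ((s.count 2 : ℚ) - s.count 1) else 0) +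
        (if x = 2 then 2 * s.count 1 * ((s.count 1 : ℚ) - s.count 2) else 0) := by
    intro x hx
    set d : ℚ := (if x = 2 then (s.count 1 : ℚ) else 0) - (if x = 1 then (s.count 2 : ℚ) else 0)
    have hsq : ∀ t ∈ (s.erase x).arrangements,
        (s1 (x :: t) : ℚ) ^ 2 = (s1 t : ℚ) ^ 2 + 2 * d * s1 t + d ^ 2 := fun t ht => by
      rw [s1_cons_of_mem_arrangements_erase ht]; ring
    rw [expect_congr rfl hsq, expect_add_distrib, expect_add_distrib, ← mul_expect,
      expect_s1_arrangements, expect_const (Multiset.arrangements_nonempty _), mul_zero, add_zero,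
      mul_add, ih _ (Multiset.erase_lt.2 hx), Multiset.cast_count_erase hx,
      Multiset.cast_count_erase hx]
    obtain rfl | rfl | ⟨h1, h2⟩ : x = 1 ∨ x = 2 ∨ x ≠ 1 ∧ x ≠ 2 := by omega
    · simp only [d, ↓reduceIte, OfNat.ofNat_ne_one, OfNat.one_ne_ofNat]; ring
    · simp only [d, ↓reduceIte, OfNat.ofNat_ne_one, OfNat.one_ne_ofNat]; ring
    · simp [d, h1, h2, Ne.symm h1, Ne.symm h2]
  have h := congrArg (3 * ·) (Multiset.card_mul_expect_arrangements s fun l => (s1 l : ℚ) ^ 2)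
  simp only [← Multiset.sum_map_mul_left] at h
  rw [Multiset.map_congr rfl hfirst, Multiset.sum_map_add, Multiset.sum_map_add,
    Multiset.map_const', Multiset.sum_replicate,
    Multiset.sum_map_eq_nsmul_single 1 fun _ h _ => if_neg h,
    Multiset.sum_map_eq_nsmul_single 2 fun _ h _ => if_neg h] at h
  have hcard : (Multiset.card s : ℚ) ≠ 0 := by simpa using hs
  apply mul_left_cancel₀ hcard
  simp only [nsmul_eq_mul, if_true] at h
  linear_combination h

theorem W_eq_arrangements (a b c : ℕ) :
    W a b c =
      (Multiset.replicate a 1 + Multiset.replicate b 2 + Multiset.replicate c 3).arrangements := by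
  ext w
  rw [W, List.mem_toFinset, List.mem_permutations, ← Multiset.coe_eq_coe,
    Multiset.mem_arrangements, ← Multiset.coe_add, ← Multiset.coe_add, Multiset.coe_replicate,
    Multiset.coe_replicate, Multiset.coe_replicate]

theorem mean_and_variance_s1_general (n : ℕ) :
    (∑ w ∈ W n n n, (s1 w : ℚ)) / ((W n n n).card : ℚ) = 0 ∧
    (∑ w ∈ W n n n,
        ((s1 w : ℚ) - (∑ v ∈ W n n n, (s1 v : ℚ)) / ((W n n n).card : ℚ)) ^ 2) /
      ((W n n n).card : ℚ) = (n : ℚ) ^ 2 * (2 * n + 1) / 3 := by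
  have hmean : (∑ w ∈ W n n n, (s1 w : ℚ)) / ((W n n n).card : ℚ) = 0 := by
    rw [← expect_eq_sum_div_card, W_eq_arrangements, expect_s1_arrangements]
  refine ⟨hmean, ?_⟩
  have hsq := three_mul_expect_s1_sq_arrangements
    (Multiset.replicate n 1 + Multiset.replicate n 2 + Multiset.replicate n 3)
  simp only [Multiset.count_add, Multiset.count_replicate_self, Multiset.count_replicate,
    OfNat.ofNat_ne_one, OfNat.one_ne_ofNat, Nat.succ_ne_self, ↓reduceIte, add_zero,
    zero_add] at hsq
  rw [hmean, ← expect_eq_sum_div_card, W_eq_arrangements]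
  simp only [sub_zero]
  linear_combination hsq / 3

theorem mean_and_variance_s1 (n : ℕ) (hn : 1 ≤ n) :
    (∑ w ∈ W n n n, (s1 w : ℚ)) / ((W n n n).card : ℚ) = 0 ∧
    (∑ w ∈ W n n n,
        ((s1 w : ℚ) - (∑ v ∈ W n n n, (s1 v : ℚ)) / ((W n n n).card : ℚ)) ^ 2) /
      ((W n n n).card : ℚ) = (n : ℚ) ^ 2 * (2 * n + 1) / 3 :=
  mean_and_variance_s1_general n
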